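/- Let the DAPC-G iterates be defined as follows: given y_0, y_1 ∈ E (with y_1 obtained arbitrarily) and a sequence of symmetric positive semidefinite linear maps H_k on E satisfying, for all k ≥ 1, both ‖id − (∇²_y F(t_k, y_k)) ∘ H_k‖ ≤ ε and ‖H_k‖ ≤ H̄, set y_{k+1|k} := y_k − H_k(∇_y F(t_k, y_k) − ∇_y F(t_{k−1}, y_k)) (prediction with backward-difference time derivative) and y_{k+1} := y_{k+1|k} − γ ∇_y F(t_{k+1}, y_{k+1|k}) (gradient correction). Define ρ := max(|1 − γm|, |1 − γL'|). If 0 < γ < 2/L' and ρσ < 1, then for every k ≥ 1: ‖y_k − y*(t_k)‖ ≤ (ρσ)^{k−1} ‖y_1 − y*(t_1)‖ + ρ · (hC0ε/m + h²Δ + h²C3H̄/2) · (1 − (ρσ)^{k−1})/(1 − ρσ). In particular limsup_{k→∞} ‖y_k − y*(t_k)‖ ≤ ρ/(1 − ρσ) · (hC0ε/m + h²Δ + h²C3H̄/2). -/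

import Mathlib

open scoped InnerProductSpace

local notation "E" n => EuclideanSpace ℝ (Fin n)

/-!
Writing `e_k = ‖y_k - y*(t_k)‖`, one step of the method gives
`e_{k+1} ≤ ρσ e_k + ρ (h C0 ε / m + h² Δ + h² C3 H̄ / 2)`, and both claims follow from this linear
recursion. The gradient correction is a `ρ`-contraction towards `y*(t_{k+1})`, since the Rayleigh
quotients of `id - γ ∇²F` lie in `[1 - γL', 1 - γm]`. The prediction is compared with the ideal
step `x ↦ x - h (∇²F)⁻¹ ∂_t∇F (t_k, x)`: this map is `σ`-Lipschitz, and it sends `y*(t_k)` to within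
`h² Δ` of `y*(t_{k+1})` because `ẏ* = -(∇²F)⁻¹ ∂_t∇F` (second-order Taylor expansion in `t` and
`y`). Replacing `∂_t∇F` by a backward difference and `(∇²F)⁻¹` by `H_k` costs the remaining
`h C0 ε / m + h² C3 H̄ / 2`.
-/

open Set Filter Topology

section InnerProduct

variable {X : Type*} [NormedAddCommGroup X] [InnerProductSpace ℝ X]

theorem mul_norm_le_norm_of_mul_sq_le_inner {u w : X} {m : ℝ} (h : m * ‖u‖ ^ 2 ≤ ⟪w, u⟫_ℝ) :
    m * ‖u‖ ≤ ‖w‖ := by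
  rcases (norm_nonneg u).eq_or_lt with hu | hu
  · rw [← hu, mul_zero]
    exact norm_nonneg w
  · refine le_of_mul_le_mul_right ?_ hu
    calc m * ‖u‖ * ‖u‖ = m * ‖u‖ ^ 2 := by ring
      _ ≤ ⟪w, u⟫_ℝ := h
      _ ≤ ‖w‖ * ‖u‖ := real_inner_le_norm w u

theorem ContinuousLinearMap.surjective_of_coercive [FiniteDimensional ℝ X] (S : X →L[ℝ] X)
    {m : ℝ} (hm : 0 < m) (hS : ∀ v, m * ‖v‖ ^ 2 ≤ ⟪S v, v⟫_ℝ) : Function.Surjective S := by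
  have hinj : Function.Injective S := by
    refine (injective_iff_map_eq_zero S).2 fun v hv => norm_le_zero_iff.1 ?_
    have := mul_norm_le_norm_of_mul_sq_le_inner (hS v)
    rw [hv, norm_zero] at this
    nlinarith [norm_nonneg v]
  exact LinearMap.injective_iff_surjective (f := (S : X →ₗ[ℝ] X)) |>.1 hinj

theorem ContinuousLinearMap.norm_id_sub_smul_le {S : X →L[ℝ] X}
    (hS : (S : X →ₗ[ℝ] X).IsSymmetric) {m L : ℝ} (hlow : ∀ v, m * ‖v‖ ^ 2 ≤ ⟪S v, v⟫_ℝ)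
    (hup : ∀ v, ⟪S v, v⟫_ℝ ≤ L * ‖v‖ ^ 2) (γ : ℝ) :
    ‖ContinuousLinearMap.id ℝ X - γ • S‖ ≤ max |1 - γ * m| |1 - γ * L| := by
  set T := ContinuousLinearMap.id ℝ X - γ • S
  have hT : (T : X →ₗ[ℝ] X).IsSymmetric := fun v w => by
    simp [T, inner_sub_left, inner_sub_right, inner_smul_left, inner_smul_right, hS.apply_clm v w]
  rw [T.norm_eq_iSup_rayleighQuotient hT]
  refine ciSup_le fun v => ?_
  rcases eq_or_ne v 0 with rfl | hv
  · simp
  have hv2 : 0 < ‖v‖ ^ 2 := by positivity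
  set r := ⟪S v, v⟫_ℝ / ‖v‖ ^ 2
  have hr : T.rayleighQuotient v = 1 - γ * r := by
    simp only [ContinuousLinearMap.rayleighQuotient, ContinuousLinearMap.reApplyInnerSelf_apply, T,
      sub_apply, smul_apply, ContinuousLinearMap.id_apply,
      inner_sub_left, real_inner_smul_left, real_inner_self_eq_norm_sq, RCLike.re_to_real, r]
    field_simp
  have hmr : m ≤ r := (le_div_iff₀ hv2).2 (hlow v)
  have hrL : r ≤ L := (div_le_iff₀ hv2).2 (hup v)
  rw [hr]
  rcases le_total 0 γ with hγ | hγ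
  · rw [max_comm]
    exact abs_le_max_abs_abs (by nlinarith) (by nlinarith)
  · exact abs_le_max_abs_abs (by nlinarith) (by nlinarith)

variable {g : X → X} {S : X → X →L[ℝ] X}

theorem norm_sub_smul_sub_le_of_hasFDerivAt (hg : ∀ x, HasFDerivAt g (S x) x)
    (hS : ∀ x, (S x : X →ₗ[ℝ] X).IsSymmetric) {m L : ℝ}
    (hlow : ∀ x v, m * ‖v‖ ^ 2 ≤ ⟪S x v, v⟫_ℝ) (hup : ∀ x v, ⟪S x v, v⟫_ℝ ≤ L * ‖v‖ ^ 2)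
    (γ : ℝ) (a b : X) :
    ‖(a - γ • g a) - (b - γ • g b)‖ ≤ max |1 - γ * m| |1 - γ * L| * ‖a - b‖ :=
  convex_univ.norm_image_sub_le_of_norm_hasFDerivWithin_le (f := fun x => x - γ • g x)
    (fun x _ => ((hasFDerivAt_id x).sub ((hg x).const_smul γ)).hasFDerivWithinAt)
    (fun x _ => ContinuousLinearMap.norm_id_sub_smul_le (hS x) (hlow x) (hup x) γ)
    (mem_univ b) (mem_univ a)

theorem mul_norm_sub_le_norm_sub_of_hasFDerivAt (hg : ∀ x, HasFDerivAt g (S x) x) {m : ℝ}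
    (hlow : ∀ x v, m * ‖v‖ ^ 2 ≤ ⟪S x v, v⟫_ℝ) (a b : X) :
    m * ‖a - b‖ ≤ ‖g a - g b‖ := by
  set d := a - b
  have hφ : ∀ τ : ℝ, HasDerivAt (fun τ : ℝ => ⟪g (b + τ • d), d⟫_ℝ) ⟪S (b + τ • d) d, d⟫_ℝ τ := by
    intro τ
    have hline : HasDerivAt (fun τ : ℝ => b + τ • d) d τ := by
      simpa using ((hasDerivAt_id τ).smul_const d).const_add b
    simpa using ((hg _).comp_hasDerivAt τ hline).inner ℝ (hasDerivAt_const τ d)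
  have hmono := mul_sub_le_image_sub_of_le_deriv (fun τ => (hφ τ).differentiableAt)
    (fun τ => (hφ τ).deriv ▸ hlow _ d) zero_le_one
  refine mul_norm_le_norm_of_mul_sq_le_inner ?_
  simpa [d, inner_sub_left] using hmono

end InnerProduct

section Taylor

variable {Y : Type*} [NormedAddCommGroup Y] [NormedSpace ℝ Y] {f f' : ℝ → Y} {a b K : ℝ}

theorem norm_sub_sub_smul_deriv_le (hf : ∀ s, HasDerivAt f (f' s) s) (hab : a ≤ b)
    (hK : ∀ s ∈ Icc a b, ‖f' s - f' a‖ ≤ K * (s - a)) :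
    ‖f b - f a - (b - a) • f' a‖ ≤ K * (b - a) ^ 2 / 2 := by
  have hr : ∀ s, HasDerivAt (fun s => f s - f a - (s - a) • f' a) (f' s - f' a) s := fun s => by
    have := ((hf s).sub_const (f a)).sub (((hasDerivAt_id s).sub_const a).smul_const (f' a))
    rwa [one_smul] at this
  have hB : ∀ s, HasDerivAt (fun s => K * (s - a) ^ 2 / 2) (K * (s - a)) s := fun s => by
    refine (((((hasDerivAt_id s).sub_const a).pow 2).const_mul K).div_const 2).congr_deriv ?_
    simp only [id_eq, Nat.cast_ofNat]
    ring
  exact image_norm_le_of_norm_deriv_right_le_deriv_boundary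
    (fun s _ => (hr s).continuousAt.continuousWithinAt) (fun s _ => (hr s).hasDerivWithinAt)
    (by simp) hB (fun s hs => hK s (Ico_subset_Icc_self hs)) (right_mem_Icc.2 hab)

theorem norm_sub_sub_smul_deriv_le_of_right (hf : ∀ s, HasDerivAt f (f' s) s) (hab : a ≤ b)
    (hK : ∀ s ∈ Icc a b, ‖f' s - f' b‖ ≤ K * (b - s)) :
    ‖f b - f a - (b - a) • f' b‖ ≤ K * (b - a) ^ 2 / 2 := by
  have hrefl : ∀ s, HasDerivAt (fun s => f (-s)) (-f' (-s)) s := fun s => by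
    have := (hf (-s)).scomp s (hasDerivAt_neg s)
    rwa [neg_one_smul] at this
  have := norm_sub_sub_smul_deriv_le (K := K) hrefl (neg_le_neg hab) fun s hs => by
    calc ‖-f' (-s) - -f' (- -b)‖ = ‖f' (-s) - f' b‖ := by rw [neg_neg, ← norm_neg]; congr 1; abel
      _ ≤ K * (b - -s) := hK (-s) ⟨le_neg_of_le_neg hs.2, neg_le.1 hs.1⟩
      _ = K * (s - -b) := by ring
  have heq : -(f b - f a - (b - a) • f' b) = f (- -a) - f (- -b) - (-a - -b) • -f' (- -b) := by
    simp only [neg_neg]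
    module
  rw [← norm_neg, heq]
  convert this using 2
  ring

end Taylor

section Gradient

variable {X : Type*} [NormedAddCommGroup X] [InnerProductSpace ℝ X] [CompleteSpace X]
  {F : X → ℝ} {g : X → X} {x : X}

theorem isSymmetric_of_hasFDerivAt_of_hasGradientAt {S : X →L[ℝ] X}
    (hF : ∀ y, HasGradientAt F (g y) y) (hg : HasFDerivAt g S x) :
    (S : X →ₗ[ℝ] X).IsSymmetric := by
  have hdual : ∀ v, InnerProductSpace.toDual ℝ X v = innerSL ℝ v := fun v => by
    ext w
    simp [InnerProductSpace.toDual_apply_apply]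
  have hF' : ∀ y, HasFDerivAt F (innerSL ℝ (g y)) y := fun y => hdual (g y) ▸ hF y
  intro v w
  have := second_derivative_symmetric hF' ((innerSL ℝ).hasFDerivAt.comp x hg) v w
  exact this.trans (real_inner_comm _ _)

theorem IsLocalMin.hasGradientAt_eq_zero {g₀ : X} (h : IsLocalMin F x)
    (hF : HasGradientAt F g₀ x) : g₀ = 0 :=
  (InnerProductSpace.toDual ℝ X).map_eq_zero_iff.1 (h.hasFDerivAt_eq_zero hF)

end Gradient

section Recursion

variable {a : ℕ → ℝ} {q B : ℝ}

theorem le_pow_mul_add_of_le_mul_add (hq : 0 ≤ q) (hq1 : q ≠ 1)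
    (ha : ∀ k, 1 ≤ k → a (k + 1) ≤ q * a k + B) :
    ∀ k, 1 ≤ k → a k ≤ q ^ (k - 1) * a 1 + B * (1 - q ^ (k - 1)) / (1 - q) := by
  have hq1' : 1 - q ≠ 0 := sub_ne_zero.2 hq1.symm
  intro k hk
  induction k, hk using Nat.le_induction with
  | base => simp
  | succ k hk ih =>
    obtain ⟨j, rfl⟩ : ∃ j, k = j + 1 := ⟨k - 1, by omega⟩
    calc a (j + 1 + 1) ≤ q * a (j + 1) + B := ha _ hk
      _ ≤ q * (q ^ j * a 1 + B * (1 - q ^ j) / (1 - q)) + B := by gcongr; simpa using ih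
      _ = q ^ (j + 1) * a 1 + B * (1 - q ^ (j + 1)) / (1 - q) := by field_simp; ring
      _ = _ := by simp

theorem limsup_le_div_of_le_mul_add (hq : 0 ≤ q) (hq1 : q < 1) (ha0 : ∀ k, 0 ≤ a k)
    (ha : ∀ k, 1 ≤ k → a (k + 1) ≤ q * a k + B) : limsup a atTop ≤ B / (1 - q) := by
  have hpow : Tendsto (fun k : ℕ => q ^ (k - 1)) atTop (𝓝 0) :=
    (tendsto_pow_atTop_nhds_zero_of_lt_one hq hq1).comp (tendsto_sub_atTop_nat 1)
  have hbound : Tendsto (fun k => q ^ (k - 1) * a 1 + B * (1 - q ^ (k - 1)) / (1 - q)) atTop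
      (𝓝 (B / (1 - q))) := by
    convert (hpow.mul_const (a 1)).add (((hpow.const_sub 1).const_mul B).div_const (1 - q))
      using 2
    simp
  calc limsup a atTop
      ≤ limsup (fun k => q ^ (k - 1) * a 1 + B * (1 - q ^ (k - 1)) / (1 - q)) atTop :=
        limsup_le_limsup (eventually_atTop.2 ⟨1, le_pow_mul_add_of_le_mul_add hq hq1.ne ha⟩)
          (isCoboundedUnder_le_of_le atTop ha0) hbound.isBoundedUnder_le
    _ = B / (1 - q) := hbound.limsup_eq

end Recursion

section Tracking

variable {X : Type*} [NormedAddCommGroup X] [InnerProductSpace ℝ X]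

/-- `g`, `Hess`, `gt`, `gtt` play the roles of `∇_y F`, `∇²_y F`, `∂_t ∇_y F`, `∂_t ∂_t ∇_y F`. -/
structure TrackingRegularity (g : ℝ → X → X) (Hess : ℝ → X → X →L[ℝ] X) (gt gtt : ℝ → X → X)
    (m L C0 C1 C2 C3 : ℝ) : Prop where
  hasFDerivAt : ∀ t y, HasFDerivAt (g t) (Hess t y) y
  hasDerivAt_time : ∀ t y, HasDerivAt (g · y) (gt t y) t
  hasDerivAt_time_time : ∀ t y, HasDerivAt (gt · y) (gtt t y) t
  isSymmetric : ∀ t y, (Hess t y : X →ₗ[ℝ] X).IsSymmetric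
  pos : 0 < m
  hess_lower : ∀ t y v, m * ‖v‖ ^ 2 ≤ ⟪Hess t y v, v⟫_ℝ
  hess_upper : ∀ t y v, ⟪Hess t y v, v⟫_ℝ ≤ L * ‖v‖ ^ 2
  norm_time_le : ∀ t y, ‖gt t y‖ ≤ C0
  hess_lipschitz : ∀ t y y', ‖Hess t y - Hess t y'‖ ≤ C1 * ‖y - y'‖
  time_lipschitz : ∀ t y y', ‖gt t y - gt t y'‖ ≤ C2 * ‖y - y'‖
  norm_time_time_le : ∀ t y, ‖gtt t y‖ ≤ C3

namespace TrackingRegularity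

-- `P t y = (∇²_y F)⁻¹ ∂_t ∇_y F (t, y)` through `hP`, so that `ẏ* = -P t y*` along minimizers.
variable {g : ℝ → X → X} {Hess : ℝ → X → X →L[ℝ] X} {gt gtt : ℝ → X → X}
  {m L C0 C1 C2 C3 : ℝ} {ystar : ℝ → X} {P : ℝ → X → X}

theorem norm_time_sub_le (A : TrackingRegularity g Hess gt gtt m L C0 C1 C2 C3) (y : X)
    (t t' : ℝ) : ‖gt t' y - gt t y‖ ≤ C3 * |t' - t| :=
  convex_univ.norm_image_sub_le_of_norm_hasDerivWithin_le
    (fun s _ => (A.hasDerivAt_time_time s y).hasDerivWithinAt)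
    (fun s _ => A.norm_time_time_le s y) (mem_univ t) (mem_univ t')

theorem norm_forward_sub_smul_time_le (A : TrackingRegularity g Hess gt gtt m L C0 C1 C2 C3)
    (y : X) (t : ℝ) {h : ℝ} (hh : 0 ≤ h) :
    ‖g (t + h) y - g t y - h • gt t y‖ ≤ C3 * h ^ 2 / 2 := by
  have := norm_sub_sub_smul_deriv_le (fun s => A.hasDerivAt_time s y)
    (le_add_of_nonneg_right hh) fun s hs =>
      (A.norm_time_sub_le y t s).trans_eq (by rw [abs_of_nonneg (sub_nonneg.2 hs.1)])
  simpa using this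

theorem norm_backward_sub_smul_time_le (A : TrackingRegularity g Hess gt gtt m L C0 C1 C2 C3)
    (y : X) (t : ℝ) {h : ℝ} (hh : 0 ≤ h) :
    ‖g t y - g (t - h) y - h • gt t y‖ ≤ C3 * h ^ 2 / 2 := by
  have := norm_sub_sub_smul_deriv_le_of_right (fun s => A.hasDerivAt_time s y)
    (sub_le_self t hh) fun s hs =>
      (A.norm_time_sub_le y t s).trans_eq (by rw [abs_of_nonpos (sub_nonpos.2 hs.2)]; ring)
  simpa using this

theorem norm_sub_sub_hess_le (A : TrackingRegularity g Hess gt gtt m L C0 C1 C2 C3) (t : ℝ)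
    (y y' : X) : ‖g t y' - g t y - Hess t y (y' - y)‖ ≤ C1 * ‖y' - y‖ ^ 2 / 2 := by
  set d := y' - y
  have hline : ∀ τ : ℝ, HasDerivAt (fun τ : ℝ => g t (y + τ • d)) (Hess t (y + τ • d) d) τ :=
    fun τ => (A.hasFDerivAt t _).comp_hasDerivAt τ
      (by simpa using ((hasDerivAt_id τ).smul_const d).const_add y)
  have := norm_sub_sub_smul_deriv_le hline zero_le_one fun τ hτ => by
    calc ‖Hess t (y + τ • d) d - Hess t (y + (0 : ℝ) • d) d‖
        ≤ ‖Hess t (y + τ • d) - Hess t y‖ * ‖d‖ := by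
          rw [zero_smul, add_zero, ← sub_apply]
          exact ContinuousLinearMap.le_opNorm _ _
      _ ≤ C1 * ‖τ • d‖ * ‖d‖ := by
          gcongr
          simpa using A.hess_lipschitz t (y + τ • d) y
      _ = C1 * ‖d‖ ^ 2 * (τ - 0) := by rw [norm_smul, Real.norm_of_nonneg hτ.1]; ring
  simpa [d] using this

theorem norm_hess_sub_le (A : TrackingRegularity g Hess gt gtt m L C0 C1 C2 C3) (hC2 : 0 ≤ C2)
    (y : X) (t t' : ℝ) : ‖Hess t' y - Hess t y‖ ≤ C2 * |t' - t| := by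
  refine ((A.hasFDerivAt t' y).sub (A.hasFDerivAt t y)).le_of_lip' (by positivity)
    (Eventually.of_forall fun z => ?_)
  have := convex_univ.norm_image_sub_le_of_norm_hasDerivWithin_le
    (f := fun s => g s z - g s y)
    (fun s _ => ((A.hasDerivAt_time s z).sub (A.hasDerivAt_time s y)).hasDerivWithinAt)
    (fun s _ => A.time_lipschitz s z y) (mem_univ t) (mem_univ t')
  calc ‖(g t' z - g t z) - (g t' y - g t y)‖ = ‖(g t' z - g t' y) - (g t z - g t y)‖ := by
        congr 1; abel
    _ ≤ C2 * ‖z - y‖ * |t' - t| := by simpa [Real.norm_eq_abs] using this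
    _ = C2 * |t' - t| * ‖z - y‖ := by ring

theorem mul_norm_minimizer_sub_le (A : TrackingRegularity g Hess gt gtt m L C0 C1 C2 C3)
    (hstar : ∀ t, g t (ystar t) = 0) (t t' : ℝ) :
    m * ‖ystar t' - ystar t‖ ≤ C0 * |t' - t| :=
  calc m * ‖ystar t' - ystar t‖ ≤ ‖g t' (ystar t') - g t' (ystar t)‖ :=
        mul_norm_sub_le_norm_sub_of_hasFDerivAt (A.hasFDerivAt t') (A.hess_lower t') _ _
    _ = ‖g t' (ystar t) - g t (ystar t)‖ := by
        rw [hstar t', hstar t, zero_sub, norm_neg, sub_zero]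
    _ ≤ C0 * |t' - t| := convex_univ.norm_image_sub_le_of_norm_hasDerivWithin_le
        (fun s _ => (A.hasDerivAt_time s (ystar t)).hasDerivWithinAt)
        (fun s _ => A.norm_time_le s (ystar t)) (mem_univ t) (mem_univ t')

theorem norm_hess_inv_time_le (A : TrackingRegularity g Hess gt gtt m L C0 C1 C2 C3)
    (hP : ∀ t y, Hess t y (P t y) = gt t y) (t : ℝ) (y : X) : ‖P t y‖ ≤ C0 / m := by
  rw [le_div_iff₀' A.pos]
  calc m * ‖P t y‖ ≤ ‖Hess t y (P t y)‖ :=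
        mul_norm_le_norm_of_mul_sq_le_inner (A.hess_lower t y _)
    _ ≤ C0 := hP t y ▸ A.norm_time_le t y

theorem norm_hess_inv_time_sub_le (A : TrackingRegularity g Hess gt gtt m L C0 C1 C2 C3)
    (hP : ∀ t y, Hess t y (P t y) = gt t y) (t : ℝ) (y y' : X) :
    ‖P t y - P t y'‖ ≤ (C0 * C1 / m ^ 2 + C2 / m) * ‖y - y'‖ := by
  have hm := A.pos
  have hkey : Hess t y (P t y - P t y') = (gt t y - gt t y') - (Hess t y - Hess t y') (P t y') := by
    rw [map_sub, hP, sub_apply, hP]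
    abel
  have hC1 : 0 ≤ C1 * ‖y - y'‖ := (norm_nonneg _).trans (A.hess_lipschitz t y y')
  have hbound : m * ‖P t y - P t y'‖ ≤ C2 * ‖y - y'‖ + C1 * ‖y - y'‖ * (C0 / m) :=
    calc m * ‖P t y - P t y'‖ ≤ ‖Hess t y (P t y - P t y')‖ :=
          mul_norm_le_norm_of_mul_sq_le_inner (A.hess_lower t y _)
      _ ≤ ‖gt t y - gt t y'‖ + ‖Hess t y - Hess t y'‖ * ‖P t y'‖ := by
          rw [hkey]
          exact (norm_sub_le _ _).trans (add_le_add le_rfl (ContinuousLinearMap.le_opNorm _ _))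
      _ ≤ C2 * ‖y - y'‖ + C1 * ‖y - y'‖ * (C0 / m) :=
          add_le_add (A.time_lipschitz t y y') (mul_le_mul (A.hess_lipschitz t y y')
            (A.norm_hess_inv_time_le hP t y') (norm_nonneg _) hC1)
  calc ‖P t y - P t y'‖ ≤ (C2 * ‖y - y'‖ + C1 * ‖y - y'‖ * (C0 / m)) / m := by
        rwa [le_div_iff₀' hm]
    _ = (C0 * C1 / m ^ 2 + C2 / m) * ‖y - y'‖ := by field_simp; ring

theorem norm_minimizer_add_sub_le (A : TrackingRegularity g Hess gt gtt m L C0 C1 C2 C3)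
    (hP : ∀ t y, Hess t y (P t y) = gt t y) (hstar : ∀ t, g t (ystar t) = 0) (hC1 : 0 ≤ C1)
    (hC2 : 0 ≤ C2) (t : ℝ) {h : ℝ} (hh : 0 ≤ h) :
    ‖ystar (t + h) - (ystar t - h • P t (ystar t))‖
      ≤ h ^ 2 * (C0 ^ 2 * C1 / (2 * m ^ 3) + C0 * C2 / m ^ 2 + C3 / (2 * m)) := by
  have hm := A.pos
  set y₀ := ystar t
  set y₁ := ystar (t + h)
  set d := y₁ - y₀
  have hd : ‖d‖ ≤ C0 * h / m := by
    rw [le_div_iff₀' hm]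
    simpa [abs_of_nonneg hh] using A.mul_norm_minimizer_sub_le hstar t (t + h)
  -- As `g t y₀ = g (t + h) y₁ = 0`, the Hessian maps the tracking error to a Taylor remainder in
  -- time, one in space, and the drift of the Hessian in time.
  have hkey : Hess (t + h) y₀ (d + h • P t y₀)
      = -(g (t + h) y₀ - g t y₀ - h • gt t y₀) - (g (t + h) y₁ - g (t + h) y₀ - Hess (t + h) y₀ d)
        + h • (Hess (t + h) y₀ - Hess t y₀) (P t y₀) := by
    rw [map_add, map_smul, sub_apply, hP, show g t y₀ = 0 from hstar t,
      show g (t + h) y₁ = 0 from hstar (t + h)]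
    module
  have hspace : ‖g (t + h) y₁ - g (t + h) y₀ - Hess (t + h) y₀ d‖ ≤ C1 * (C0 * h / m) ^ 2 / 2 :=
    (A.norm_sub_sub_hess_le _ _ _).trans (by gcongr)
  have hhess : ‖h • (Hess (t + h) y₀ - Hess t y₀) (P t y₀)‖ ≤ h * (C2 * h * (C0 / m)) := by
    rw [norm_smul, Real.norm_of_nonneg hh]
    gcongr
    refine (ContinuousLinearMap.le_opNorm _ _).trans
      (mul_le_mul ?_ (A.norm_hess_inv_time_le hP _ _) (norm_nonneg _) (by positivity))
    simpa [abs_of_nonneg hh] using A.norm_hess_sub_le hC2 y₀ t (t + h)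
  have hsum : m * ‖d + h • P t y₀‖
      ≤ C3 * h ^ 2 / 2 + C1 * (C0 * h / m) ^ 2 / 2 + h * (C2 * h * (C0 / m)) :=
    calc m * ‖d + h • P t y₀‖ ≤ ‖Hess (t + h) y₀ (d + h • P t y₀)‖ :=
          mul_norm_le_norm_of_mul_sq_le_inner (A.hess_lower _ _ _)
      _ ≤ _ := by
          rw [hkey]
          refine (norm_add_le _ _).trans (add_le_add ((norm_sub_le _ _).trans
            (add_le_add ?_ hspace)) hhess)
          rw [norm_neg]
          exact A.norm_forward_sub_smul_time_le y₀ t hh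
  calc ‖y₁ - (y₀ - h • P t y₀)‖ = ‖(y₁ - y₀) + h • P t y₀‖ := by congr 1; abel
    _ ≤ (C3 * h ^ 2 / 2 + C1 * (C0 * h / m) ^ 2 / 2 + h * (C2 * h * (C0 / m))) / m := by
        rwa [le_div_iff₀' hm]
    _ = _ := by field_simp; ring

theorem norm_predict_sub_le (A : TrackingRegularity g Hess gt gtt m L C0 C1 C2 C3)
    (hP : ∀ t y, Hess t y (P t y) = gt t y) {H : X →L[ℝ] X} {ε Hbar t h : ℝ} {x : X}
    (hh : 0 ≤ h) (hHerr : ‖ContinuousLinearMap.id ℝ X - (Hess t x).comp H‖ ≤ ε)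
    (hHnorm : ‖H‖ ≤ Hbar) :
    ‖(x - H (g t x - g (t - h) x)) - (x - h • P t x)‖
      ≤ h * C0 * ε / m + h ^ 2 * C3 * Hbar / 2 := by
  have hm := A.pos
  have hsplit : (x - H (g t x - g (t - h) x)) - (x - h • P t x)
      = h • (P t x - H (gt t x)) - H (g t x - g (t - h) x - h • gt t x) := by
    rw [map_sub H _ (h • gt t x), map_smul]
    module
  have hdir : m * ‖P t x - H (gt t x)‖ ≤ ε * C0 :=
    calc m * ‖P t x - H (gt t x)‖ ≤ ‖Hess t x (P t x - H (gt t x))‖ :=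
          mul_norm_le_norm_of_mul_sq_le_inner (A.hess_lower t x _)
      _ = ‖(ContinuousLinearMap.id ℝ X - (Hess t x).comp H) (gt t x)‖ := by
          rw [map_sub, hP]
          rfl
      _ ≤ ε * C0 := (ContinuousLinearMap.le_opNorm _ _).trans
          (mul_le_mul hHerr (A.norm_time_le t x) (norm_nonneg _) ((norm_nonneg _).trans hHerr))
  rw [hsplit]
  calc _ ≤ ‖h • (P t x - H (gt t x))‖ + ‖H (g t x - g (t - h) x - h • gt t x)‖ :=
        norm_sub_le _ _
    _ ≤ h * (ε * C0 / m) + Hbar * (C3 * h ^ 2 / 2) := by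
        refine add_le_add ?_ ((ContinuousLinearMap.le_opNorm _ _).trans
          (mul_le_mul hHnorm (A.norm_backward_sub_smul_time_le x t hh) (norm_nonneg _)
            ((norm_nonneg _).trans hHnorm)))
        rw [norm_smul, Real.norm_of_nonneg hh]
        gcongr
        rwa [le_div_iff₀' hm]
    _ = _ := by ring

theorem norm_predict_sub_minimizer_le (A : TrackingRegularity g Hess gt gtt m L C0 C1 C2 C3)
    (hP : ∀ t y, Hess t y (P t y) = gt t y) (hstar : ∀ t, g t (ystar t) = 0) (hC1 : 0 ≤ C1)
    (hC2 : 0 ≤ C2) {H : X →L[ℝ] X} {ε Hbar t h : ℝ} {x : X} (hh : 0 ≤ h)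
    (hHerr : ‖ContinuousLinearMap.id ℝ X - (Hess t x).comp H‖ ≤ ε) (hHnorm : ‖H‖ ≤ Hbar) :
    ‖(x - H (g t x - g (t - h) x)) - ystar (t + h)‖
      ≤ (1 + h * (C0 * C1 / m ^ 2 + C2 / m)) * ‖x - ystar t‖
        + (h * C0 * ε / m + h ^ 2 * (C0 ^ 2 * C1 / (2 * m ^ 3) + C0 * C2 / m ^ 2 + C3 / (2 * m))
          + h ^ 2 * C3 * Hbar / 2) := by
  have hlip : ‖(x - h • P t x) - (ystar t - h • P t (ystar t))‖
      ≤ (1 + h * (C0 * C1 / m ^ 2 + C2 / m)) * ‖x - ystar t‖ :=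
    calc _ = ‖(x - ystar t) - h • (P t x - P t (ystar t))‖ := by congr 1; module
      _ ≤ ‖x - ystar t‖ + h * ((C0 * C1 / m ^ 2 + C2 / m) * ‖x - ystar t‖) := by
          refine (norm_sub_le _ _).trans (add_le_add le_rfl ?_)
          rw [norm_smul, Real.norm_of_nonneg hh]
          exact mul_le_mul_of_nonneg_left (A.norm_hess_inv_time_sub_le hP t x (ystar t)) hh
      _ = _ := by ring
  have hpred := A.norm_predict_sub_le hP hh hHerr hHnorm
  have htrack := A.norm_minimizer_add_sub_le hP hstar hC1 hC2 t hh
  rw [norm_sub_rev] at htrack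
  have h₁ := norm_sub_le_norm_sub_add_norm_sub (x - H (g t x - g (t - h) x)) (x - h • P t x)
    (ystar (t + h))
  have h₂ := norm_sub_le_norm_sub_add_norm_sub (x - h • P t x) (ystar t - h • P t (ystar t))
    (ystar (t + h))
  linarith

theorem norm_correct_sub_minimizer_le (A : TrackingRegularity g Hess gt gtt m L C0 C1 C2 C3)
    (hstar : ∀ t, g t (ystar t) = 0) (γ t : ℝ) (z : X) :
    ‖(z - γ • g t z) - ystar t‖ ≤ max |1 - γ * m| |1 - γ * L| * ‖z - ystar t‖ := by
  have := norm_sub_smul_sub_le_of_hasFDerivAt (A.hasFDerivAt t) (A.isSymmetric t)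
    (A.hess_lower t) (A.hess_upper t) γ z (ystar t)
  rwa [hstar, smul_zero, sub_zero] at this

theorem norm_step_sub_minimizer_le (A : TrackingRegularity g Hess gt gtt m L C0 C1 C2 C3)
    (hP : ∀ t y, Hess t y (P t y) = gt t y) (hstar : ∀ t, g t (ystar t) = 0) (hC1 : 0 ≤ C1)
    (hC2 : 0 ≤ C2) {H : X →L[ℝ] X} {ε Hbar γ t h : ℝ} {x : X} (hh : 0 ≤ h)
    (hHerr : ‖ContinuousLinearMap.id ℝ X - (Hess t x).comp H‖ ≤ ε) (hHnorm : ‖H‖ ≤ Hbar) :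
    ‖(x - H (g t x - g (t - h) x)) - γ • g (t + h) (x - H (g t x - g (t - h) x)) - ystar (t + h)‖
      ≤ max |1 - γ * m| |1 - γ * L| * (1 + h * (C0 * C1 / m ^ 2 + C2 / m)) * ‖x - ystar t‖
        + max |1 - γ * m| |1 - γ * L| * (h * C0 * ε / m
          + h ^ 2 * (C0 ^ 2 * C1 / (2 * m ^ 3) + C0 * C2 / m ^ 2 + C3 / (2 * m))
          + h ^ 2 * C3 * Hbar / 2) := by
  have hρ : 0 ≤ max |1 - γ * m| |1 - γ * L| := (abs_nonneg _).trans (le_max_left _ _)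
  refine (A.norm_correct_sub_minimizer_le hstar γ _ _).trans ?_
  rw [mul_assoc, ← mul_add]
  gcongr
  exact A.norm_predict_sub_minimizer_le hP hstar hC1 hC2 hh hHerr hHnorm

end TrackingRegularity

end Tracking

theorem stmt_18_general {n : ℕ}
    (F : ℝ → (E n) → ℝ)
    (Fgrad : ℝ → (E n) → (E n))
    (Hess : ℝ → (E n) → (E n) →L[ℝ] (E n))
    (Gt Gtt : ℝ → (E n) → (E n))
    (m L' C0 C1 C2 C3 : ℝ)
    (hm : 0 < m)
    (hC0 : 0 ≤ C0) (hC1 : 0 ≤ C1) (hC2 : 0 ≤ C2)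
    (hgrad : ∀ t y, HasGradientAt (F t) (Fgrad t y) y)
    (hhess : ∀ t y, HasFDerivAt (Fgrad t) (Hess t y) y)
    (ht : ∀ t y, HasDerivAt (fun s => Fgrad s y) (Gt t y) t)
    (htt : ∀ t y, HasDerivAt (fun s => Gt s y) (Gtt t y) t)
    (hstrong : ∀ t y (v : E n), m * ‖v‖ ^ 2 ≤ ⟪Hess t y v, v⟫_ℝ)
    (hsmooth : ∀ t y (v : E n), ⟪Hess t y v, v⟫_ℝ ≤ L' * ‖v‖ ^ 2)
    (hC0b : ∀ t y, ‖Gt t y‖ ≤ C0)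
    (hC1b : ∀ t y y', ‖Hess t y - Hess t y'‖ ≤ C1 * ‖y - y'‖)
    (hC2b : ∀ t y y', ‖Gt t y - Gt t y'‖ ≤ C2 * ‖y - y'‖)
    (hC3b : ∀ t y, ‖Gtt t y‖ ≤ C3)
    (ystar : ℝ → E n)
    (hmin : ∀ t, IsMinOn (F t) Set.univ (ystar t))
    (h γ ε Hbar Δ σ ρ : ℝ) (hh : 0 < h)
    (hΔ : Δ = C0 ^ 2 * C1 / (2 * m ^ 3) + C0 * C2 / m ^ 2 + C3 / (2 * m))
    (hσ : σ = 1 + h * (C0 * C1 / m ^ 2 + C2 / m))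
    (hρ : ρ = max |1 - γ * m| |1 - γ * L'|)
    (hρσ : ρ * σ < 1)
    (tk : ℕ → ℝ) (htk : ∀ k : ℕ, tk k = k * h)
    (y ypred : ℕ → E n)
    (H : ℕ → (E n) →L[ℝ] (E n))
    (hHerr : ∀ k, 1 ≤ k →
      ‖ContinuousLinearMap.id ℝ (E n) - (Hess (tk k) (y k)).comp (H k)‖ ≤ ε)
    (hHnorm : ∀ k, 1 ≤ k → ‖H k‖ ≤ Hbar)
    (hpred : ∀ k, 1 ≤ k →
      ypred k = y k - H k (Fgrad (tk k) (y k) - Fgrad (tk (k - 1)) (y k)))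
    (hcorr : ∀ k, 1 ≤ k → y (k + 1) = ypred k - γ • Fgrad (tk (k + 1)) (ypred k)) :
    (∀ k : ℕ, 1 ≤ k → ‖y k - ystar (tk k)‖
        ≤ (ρ * σ) ^ (k - 1) * ‖y 1 - ystar (tk 1)‖
          + ρ * (h * C0 * ε / m + h ^ 2 * Δ + h ^ 2 * C3 * Hbar / 2)
            * (1 - (ρ * σ) ^ (k - 1)) / (1 - ρ * σ))
    ∧ Filter.limsup (fun k => ‖y k - ystar (tk k)‖) Filter.atTop
        ≤ ρ / (1 - ρ * σ) * (h * C0 * ε / m + h ^ 2 * Δ + h ^ 2 * C3 * Hbar / 2) := by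
  choose P hP using fun t y => (Hess t y).surjective_of_coercive hm (hstrong t y) (Gt t y)
  have A : TrackingRegularity Fgrad Hess Gt Gtt m L' C0 C1 C2 C3 :=
    ⟨hhess, ht, htt, fun t y => isSymmetric_of_hasFDerivAt_of_hasGradientAt (hgrad t) (hhess t y),
      hm, hstrong, hsmooth, hC0b, hC1b, hC2b, hC3b⟩
  have hstar : ∀ t, Fgrad t (ystar t) = 0 := fun t =>
    ((hmin t).isLocalMin univ_mem).hasGradientAt_eq_zero (hgrad t _)
  have hq : 0 ≤ ρ * σ := by rw [hρ, hσ]; positivity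
  have hstep : ∀ k, 1 ≤ k → ‖y (k + 1) - ystar (tk (k + 1))‖
      ≤ ρ * σ * ‖y k - ystar (tk k)‖
        + ρ * (h * C0 * ε / m + h ^ 2 * Δ + h ^ 2 * C3 * Hbar / 2) := by
    intro k hk
    have hsucc : tk (k + 1) = tk k + h := by rw [htk, htk]; push_cast; ring
    have hprev : tk (k - 1) = tk k - h := by rw [htk, htk, Nat.cast_sub hk]; push_cast; ring
    rw [hcorr k hk, hpred k hk, hsucc, hprev, hρ, hσ, hΔ]
    exact A.norm_step_sub_minimizer_le hP hstar hC1 hC2 hh.le (hHerr k hk) (hHnorm k hk)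
  refine ⟨le_pow_mul_add_of_le_mul_add hq hρσ.ne hstep, ?_⟩
  rw [div_mul_eq_mul_div]
  exact limsup_le_div_of_le_mul_add hq hρσ (fun k => norm_nonneg _) hstep

/-- Theorem 1 for DAPC-G: prediction with the backward-difference
time derivative, y_{k+1|k} = y_k − H_k(∇F(t_k,y_k) − ∇F(t_{k−1},y_k)), followed
by a gradient correction; where ‖H_k‖ ≤ H̄ (written `Hbar`). Convergence is
Q-linear with rate ρσ < 1 up to an asymptotic error
ρ/(1−ρσ)·(hC0ε/m + h²Δ + h²C3H̄/2). -/
theorem stmt_18 {n : ℕ} (hn : 1 ≤ n)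
    (F : ℝ → (E n) → ℝ)
    (Fgrad : ℝ → (E n) → (E n))
    (Hess : ℝ → (E n) → (E n) →L[ℝ] (E n))
    (Gt Gtt : ℝ → (E n) → (E n))
    (m L' C0 C1 C2 C3 : ℝ)
    (hm : 0 < m) (hmL : m ≤ L')
    (hC0 : 0 ≤ C0) (hC1 : 0 ≤ C1) (hC2 : 0 ≤ C2) (hC3 : 0 ≤ C3)
    (hF2 : ∀ t, ContDiff ℝ 2 (F t))
    (hG1 : ContDiff ℝ 1 (Function.uncurry Fgrad))
    (hgrad : ∀ t y, HasGradientAt (F t) (Fgrad t y) y)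
    (hhess : ∀ t y, HasFDerivAt (Fgrad t) (Hess t y) y)
    (ht : ∀ t y, HasDerivAt (fun s => Fgrad s y) (Gt t y) t)
    (htt : ∀ t y, HasDerivAt (fun s => Gt s y) (Gtt t y) t)
    (hstrong : ∀ t y (v : E n), m * ‖v‖ ^ 2 ≤ ⟪Hess t y v, v⟫_ℝ)
    (hsmooth : ∀ t y (v : E n), ⟪Hess t y v, v⟫_ℝ ≤ L' * ‖v‖ ^ 2)
    (hC0b : ∀ t y, ‖Gt t y‖ ≤ C0)
    (hC1b : ∀ t y y', ‖Hess t y - Hess t y'‖ ≤ C1 * ‖y - y'‖)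
    (hC2b : ∀ t y y', ‖Gt t y - Gt t y'‖ ≤ C2 * ‖y - y'‖)
    (hC3b : ∀ t y, ‖Gtt t y‖ ≤ C3)
    (ystar : ℝ → E n)
    (hmin : ∀ t, IsMinOn (F t) Set.univ (ystar t))
    (h γ ε Hbar Δ σ ρ : ℝ) (hh : 0 < h) (hε : 0 ≤ ε) (hHbar : 0 ≤ Hbar)
    (hγ : 0 < γ) (hγ2 : γ < 2 / L')
    (hΔ : Δ = C0 ^ 2 * C1 / (2 * m ^ 3) + C0 * C2 / m ^ 2 + C3 / (2 * m))
    (hσ : σ = 1 + h * (C0 * C1 / m ^ 2 + C2 / m))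
    (hρ : ρ = max |1 - γ * m| |1 - γ * L'|)
    (hρσ : ρ * σ < 1)
    (tk : ℕ → ℝ) (htk : ∀ k : ℕ, tk k = k * h)
    (y ypred : ℕ → E n)
    (H : ℕ → (E n) →L[ℝ] (E n))
    (hHsa : ∀ k, 1 ≤ k → IsSelfAdjoint (H k))
    (hHpsd : ∀ k, 1 ≤ k → ∀ v : E n, 0 ≤ ⟪H k v, v⟫_ℝ)
    (hHerr : ∀ k, 1 ≤ k →
      ‖ContinuousLinearMap.id ℝ (E n) - (Hess (tk k) (y k)).comp (H k)‖ ≤ ε)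
    (hHnorm : ∀ k, 1 ≤ k → ‖H k‖ ≤ Hbar)
    (hpred : ∀ k, 1 ≤ k →
      ypred k = y k - H k (Fgrad (tk k) (y k) - Fgrad (tk (k - 1)) (y k)))
    (hcorr : ∀ k, 1 ≤ k → y (k + 1) = ypred k - γ • Fgrad (tk (k + 1)) (ypred k)) :
    (∀ k : ℕ, 1 ≤ k → ‖y k - ystar (tk k)‖
        ≤ (ρ * σ) ^ (k - 1) * ‖y 1 - ystar (tk 1)‖
          + ρ * (h * C0 * ε / m + h ^ 2 * Δ + h ^ 2 * C3 * Hbar / 2)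
            * (1 - (ρ * σ) ^ (k - 1)) / (1 - ρ * σ))
    ∧ Filter.limsup (fun k => ‖y k - ystar (tk k)‖) Filter.atTop
        ≤ ρ / (1 - ρ * σ) * (h * C0 * ε / m + h ^ 2 * Δ + h ^ 2 * C3 * Hbar / 2) :=
  stmt_18_general F Fgrad Hess Gt Gtt m L' C0 C1 C2 C3 hm hC0 hC1 hC2 hgrad hhess ht htt hstrong
    hsmooth hC0b hC1b hC2b hC3b ystar hmin h γ ε Hbar Δ σ ρ hh hΔ hσ hρ hρσ tk htk y ypred H hHerr
    hHnorm hpred hcorr
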